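/- Let n be an odd positive integer, let d be a divisor of n, and let ν_1, …, ν_d be integers such that the multiset of ∼_d-classes of (ν_1, …, ν_d) equals the multiset of ∼_d-classes of (1, 2, …, d). Let b be an integer and let e be a divisor of the radical of d (the product of the distinct primes dividing d). Then the set {i : 1 ≤ i ≤ d, gcd(d, γ_n(ν_i)) = e, and ν_i ∼_{n/γ_n(ν_i)} b} has at most 2 elements. -/

import Mathlib

/-- `nPart n p = p^{v_p(n)}`, the `p`-part of `n`. -/
def nPart (n p : ℕ) : ℕ := p ^ (n.factorization p)

/-- The representative of `x` modulo `m` lying in the interval `(-m/2, m/2]`. -/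
def midRep (x : ℤ) (m : ℕ) : ℤ :=
  if 2 * (x % (m : ℤ)) ≤ (m : ℤ) then x % (m : ℤ) else x % (m : ℤ) - (m : ℤ)

/-- `|x|_m`, the absolute value of the representative of `x` modulo `m` in
`(-m/2, m/2]`. -/
def absRep (x : ℤ) (m : ℕ) : ℤ := |midRep x m|

/-- `γ_n(x)`, the product of the primes `p` dividing `n` with
`|x|_{n_p} < n_p/(2p)`. -/
def gammaFn (n : ℕ) (x : ℤ) : ℕ :=
  ∏ p ∈ n.primeFactors,
    if 2 * (p : ℤ) * absRep x (nPart n p) < (nPart n p : ℤ) then p else 1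

/-- The predicate describing membership in `𝔹_n ⊆ ℤ/nℤ`:
`|x|_{n_p} > n_p/(2p)` for every prime `p` dividing `n`. -/
def inBB (n : ℕ) (b : ZMod n) : Prop :=
  ∀ p ∈ n.primeFactors, (nPart n p : ℤ) < 2 * (p : ℤ) * absRep (b.val : ℤ) (nPart n p)


/-- `𝔹_n` realized as the finset of representatives `b ∈ {0, …, n−1}` with
`|b|_{n_p} > n_p/(2p)` for every prime `p` dividing `n`. -/
def BBFinset (n : ℕ) : Finset ℕ :=
  (Finset.range n).filter
    (fun b => ∀ p ∈ n.primeFactors,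
      (nPart n p : ℤ) < 2 * (p : ℤ) * absRep (b : ℤ) (nPart n p))

/-- The radical of `d`: the product of the distinct primes dividing `d`. -/
def radical (d : ℕ) : ℕ := ∏ p ∈ d.primeFactors, p

/-!
Write `γ = gammaFn n`. It is squarefree, so for `p^k ∥ n` the modulus `n / γ x` is divisible
by `p^k` if `p ∤ γ x` and by `p^(k-1)` if `p ∣ γ x`. Let `x ≡ c (mod n / γ x)` and
`y ≡ c (mod n / γ y)` with `gcd(d, γ x) = gcd(d, γ y)` (as `γ (-x) = γ x`, signs can be absorbed
into `x` and `y`). A prime `p ∣ d` then divides both `γ x` and `γ y` or neither. In the second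
case `x ≡ y (mod p^k)` at once; in the first only `x ≡ y (mod p^(k-1))`, but `p ∣ γ` means
`2|x|_{p^k}, 2|y|_{p^k} < p^(k-1)`, which lifts the congruence to `p^k`. Hence `x ∼_d y`.

So the values `ν_i` on the set are pairwise `∼_d`-equivalent, and so are the corresponding
values among `1, …, d`. Three such values cannot exist: `a ≡ -b` and `a ≡ -c` force `b ≡ c`,
and distinct values of `1, …, d` are never congruent modulo `d`.
-/

open Finset

theorem Int.modEq_neg_iff_neg_modEq {n a b : ℤ} : a ≡ -b [ZMOD n] ↔ -a ≡ b [ZMOD n] := by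
  rw [← Int.neg_modEq_neg, neg_neg]

theorem Fin.eq_of_intCast_modEq {d : ℕ} {i j : Fin d} (h : (i : ℤ) ≡ j [ZMOD d]) : i = j := by
  rw [Int.ModEq, Int.emod_eq_of_lt (by positivity) (by omega),
    Int.emod_eq_of_lt (by positivity) (by omega)] at h
  exact Fin.ext (by exact_mod_cast h)

/-- The paper's `x ∼_m y`. -/
def SignModEq (m : ℕ) (x y : ℤ) : Prop := x ≡ y [ZMOD m] ∨ x ≡ -y [ZMOD m]

namespace SignModEq

variable {m : ℕ} {x y z : ℤ}

theorem symm (h : SignModEq m x y) : SignModEq m y x :=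
  h.imp Int.ModEq.symm fun h ↦ by simpa using h.neg.symm

theorem trans (h₁ : SignModEq m x y) (h₂ : SignModEq m y z) : SignModEq m x z := by
  rcases h₁ with h₁ | h₁ <;> rcases h₂ with h₂ | h₂
  · exact .inl (h₁.trans h₂)
  · exact .inr (h₁.trans h₂)
  · exact .inr (h₁.trans (by simpa using h₂.neg))
  · exact .inl (h₁.trans (by simpa using h₂.neg))

end SignModEq

theorem ncard_le_two_of_pairwise_signModEq {ι : Type*} {m : ℕ} {f : ι → ℤ}
    (hf : ∀ i j, f i ≡ f j [ZMOD m] → i = j) {s : Set ι}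
    (hs : ∀ i ∈ s, ∀ j ∈ s, SignModEq m (f i) (f j)) : s.ncard ≤ 2 := by
  obtain hinf | hfin := s.infinite_or_finite
  · simp [hinf.ncard]
  by_contra! h
  obtain ⟨i, j, k, hi, hj, hk, hij, hik, hjk⟩ := (Set.two_lt_ncard_iff hfin).mp h
  rcases hs i hi j hj with hij' | hij'
  · exact hij (hf i j hij')
  rcases hs i hi k hk with hik' | hik'
  · exact hik (hf i k hik')
  have hji : f j ≡ -f i [ZMOD m] := by simpa using hij'.neg.symm
  exact hjk (hf j k (hji.trans (by simpa using hik'.neg)))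

theorem midRep_modEq (x : ℤ) (m : ℕ) : midRep x m ≡ x [ZMOD m] := by
  unfold midRep
  split
  · exact Int.emod_emod_of_dvd x dvd_rfl
  · simp [Int.ModEq, Int.emod_emod_of_dvd]

theorem midRep_bounds (x : ℤ) {m : ℕ} (hm : 0 < m) :
    -(m : ℤ) < 2 * midRep x m ∧ 2 * midRep x m ≤ m := by
  have h₁ : 0 ≤ x % (m : ℤ) := Int.emod_nonneg x (by positivity)
  have h₂ : x % (m : ℤ) < m := Int.emod_lt_of_pos x (by positivity)
  unfold midRep
  split <;> omega

theorem midRep_eq_of_modEq {m : ℕ} (hm : 0 < m) {x r : ℤ} (hr : r ≡ x [ZMOD m])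
    (h₁ : -(m : ℤ) < 2 * r) (h₂ : 2 * r ≤ m) : midRep x m = r := by
  obtain ⟨h₃, h₄⟩ := midRep_bounds x hm
  have hdvd : (m : ℤ) ∣ r - midRep x m := ((midRep_modEq x m).trans hr.symm).dvd
  have := Int.eq_zero_of_abs_lt_dvd hdvd (abs_lt.mpr ⟨by omega, by omega⟩)
  omega

theorem absRep_neg (x : ℤ) (m : ℕ) : absRep (-x) m = absRep x m := by
  rcases m.eq_zero_or_pos with rfl | hm
  · simp [absRep, midRep]
  obtain ⟨h₁, h₂⟩ := midRep_bounds x hm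
  unfold absRep
  rcases h₂.lt_or_eq with h₂ | h₂
  · rw [midRep_eq_of_modEq hm (midRep_modEq x m).neg (by omega) (by omega), abs_neg]
  · -- `midRep x m = m / 2` is its own negative modulo `m`
    have hself : midRep x m ≡ -midRep x m [ZMOD m] := Int.modEq_iff_dvd.mpr ⟨-1, by omega⟩
    rw [midRep_eq_of_modEq hm (hself.trans (midRep_modEq x m).neg) h₁ h₂.le]

theorem modEq_of_modEq_of_two_mul_absRep_lt {m q : ℕ} (hqm : q ∣ m) {x y : ℤ}
    (hx : 2 * absRep x m < q) (hy : 2 * absRep y m < q) (h : x ≡ y [ZMOD q]) :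
    x ≡ y [ZMOD m] := by
  unfold absRep at hx hy
  have hq : midRep x m ≡ midRep y m [ZMOD q] :=
    ((midRep_modEq x m).of_dvd (Int.natCast_dvd_natCast.mpr hqm)).trans
      (h.trans ((midRep_modEq y m).of_dvd (Int.natCast_dvd_natCast.mpr hqm)).symm)
  have habs : |midRep y m - midRep x m| < q := by
    linarith [abs_sub (midRep y m) (midRep x m)]
  have heq : midRep x m = midRep y m := by
    linarith [Int.eq_zero_of_abs_lt_dvd hq.dvd habs]
  exact (midRep_modEq x m).symm.trans (heq ▸ midRep_modEq y m)

theorem Nat.pow_sub_factorization_dvd_div {m n : ℕ} (h : m ∣ n) (p : ℕ) :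
    p ^ (n.factorization p - m.factorization p) ∣ n / m := by
  simpa [Nat.factorization_div h] using Nat.ordProj_dvd (n / m) p

theorem Nat.squarefree_prod_of_forall_prime {s : Finset ℕ} (hs : ∀ p ∈ s, p.Prime) :
    Squarefree (∏ p ∈ s, p) :=
  squarefree_prod_of_pairwise_isCoprime
    (fun p hp q hq hpq ↦
      Nat.coprime_iff_isRelPrime.mp ((Nat.coprime_primes (hs p hp) (hs q hq)).mpr hpq))
    fun p hp ↦ (hs p hp).prime.squarefree

section gammaFn

variable {n p : ℕ} {x : ℤ}

theorem gammaFn_eq_prod_filter (n : ℕ) (x : ℤ) :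
    gammaFn n x = ∏ p ∈ n.primeFactors.filter
      (fun p : ℕ ↦ 2 * (p : ℤ) * absRep x (nPart n p) < nPart n p), p := by
  rw [gammaFn, prod_filter]

theorem gammaFn_neg (n : ℕ) (x : ℤ) : gammaFn n (-x) = gammaFn n x := by
  simp only [gammaFn, absRep_neg]

theorem gammaFn_dvd (n : ℕ) (x : ℤ) : gammaFn n x ∣ n := by
  rw [gammaFn_eq_prod_filter]
  exact (prod_dvd_prod_of_subset _ _ _ (filter_subset _ _)).trans (Nat.prod_primeFactors_dvd n)

theorem squarefree_gammaFn (n : ℕ) (x : ℤ) : Squarefree (gammaFn n x) := by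
  rw [gammaFn_eq_prod_filter]
  exact Nat.squarefree_prod_of_forall_prime fun p hp ↦
    Nat.prime_of_mem_primeFactors (mem_filter.mp hp).1

theorem primeFactors_gammaFn (n : ℕ) (x : ℤ) :
    (gammaFn n x).primeFactors = n.primeFactors.filter
      (fun p : ℕ ↦ 2 * (p : ℤ) * absRep x (nPart n p) < nPart n p) := by
  rw [gammaFn_eq_prod_filter,
    Nat.primeFactors_prod fun p hp ↦ Nat.prime_of_mem_primeFactors (mem_filter.mp hp).1]

theorem prime_dvd_gammaFn_iff (hp : p.Prime) :
    p ∣ gammaFn n x ↔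
      p ∈ n.primeFactors ∧ 2 * (p : ℤ) * absRep x (nPart n p) < nPart n p := by
  have h := Nat.mem_primeFactors_of_ne_zero (p := p) (squarefree_gammaFn n x).ne_zero
  rw [primeFactors_gammaFn, mem_filter, and_iff_right hp] at h
  exact h.symm

theorem ordProj_dvd_div_gammaFn (h : ¬ p ∣ gammaFn n x) :
    p ^ n.factorization p ∣ n / gammaFn n x := by
  simpa [Nat.factorization_eq_zero_of_not_dvd h] using
    Nat.pow_sub_factorization_dvd_div (gammaFn_dvd n x) p

theorem pow_pred_dvd_div_gammaFn (hp : p.Prime) (h : p ∣ gammaFn n x) :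
    p ^ (n.factorization p - 1) ∣ n / gammaFn n x := by
  simpa [Nat.factorization_eq_one_of_squarefree (squarefree_gammaFn n x) hp h] using
    Nat.pow_sub_factorization_dvd_div (gammaFn_dvd n x) p

theorem two_mul_absRep_lt_of_dvd_gammaFn (hp : p.Prime) (h : p ∣ gammaFn n x) :
    2 * absRep x (p ^ n.factorization p) < (p ^ (n.factorization p - 1) : ℕ) := by
  obtain ⟨hpn, hsmall⟩ := (prime_dvd_gammaFn_iff hp).mp h
  have hk : 0 < n.factorization p :=
    hp.factorization_pos_of_dvd (Nat.mem_primeFactors.mp hpn).2.2 (Nat.dvd_of_mem_primeFactors hpn)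
  have hsplit : ((nPart n p : ℕ) : ℤ) = p * (p ^ (n.factorization p - 1) : ℕ) := by
    rw [nPart, ← Nat.cast_mul, ← pow_succ', Nat.sub_add_cancel hk]
  rw [hsplit, nPart] at hsmall
  exact lt_of_mul_lt_mul_left (a := (p : ℤ)) (by linarith) (by positivity)

theorem modEq_ordProj_of_dvd_gammaFn_iff (hp : p.Prime) {y c : ℤ}
    (hxy : p ∣ gammaFn n x ↔ p ∣ gammaFn n y)
    (hxc : x ≡ c [ZMOD (n / gammaFn n x : ℕ)]) (hyc : y ≡ c [ZMOD (n / gammaFn n y : ℕ)]) :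
    x ≡ y [ZMOD (p ^ n.factorization p : ℕ)] := by
  by_cases hpx : p ∣ gammaFn n x
  · have hpy := hxy.mp hpx
    refine modEq_of_modEq_of_two_mul_absRep_lt (pow_dvd_pow p (Nat.sub_le _ 1))
      (two_mul_absRep_lt_of_dvd_gammaFn hp hpx) (two_mul_absRep_lt_of_dvd_gammaFn hp hpy) ?_
    exact (hxc.of_dvd (Int.natCast_dvd_natCast.mpr (pow_pred_dvd_div_gammaFn hp hpx))).trans
      (hyc.of_dvd (Int.natCast_dvd_natCast.mpr (pow_pred_dvd_div_gammaFn hp hpy))).symm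
  · have hpy := mt hxy.mpr hpx
    exact (hxc.of_dvd (Int.natCast_dvd_natCast.mpr (ordProj_dvd_div_gammaFn hpx))).trans
      (hyc.of_dvd (Int.natCast_dvd_natCast.mpr (ordProj_dvd_div_gammaFn hpy))).symm

end gammaFn

theorem modEq_of_gcd_gammaFn_eq {n d : ℕ} (hn : n ≠ 0) (hd : d ∣ n) {x y c : ℤ}
    (hγ : d.gcd (gammaFn n x) = d.gcd (gammaFn n y))
    (hxc : x ≡ c [ZMOD (n / gammaFn n x : ℕ)]) (hyc : y ≡ c [ZMOD (n / gammaFn n y : ℕ)]) :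
    x ≡ y [ZMOD d] := by
  rw [Int.modEq_iff_dvd, Int.natCast_dvd, Nat.dvd_iff_prime_pow_dvd_dvd]
  intro p k hp hpk
  rcases k.eq_zero_or_pos with rfl | hk
  · simp
  have hpd : p ∣ d := (dvd_pow_self p hk.ne').trans hpk
  have hle : p ^ k ∣ p ^ n.factorization p :=
    pow_dvd_pow p ((hp.pow_dvd_iff_le_factorization hn).mp (hpk.trans hd))
  have hxy : p ∣ gammaFn n x ↔ p ∣ gammaFn n y := by
    simpa [Nat.dvd_gcd_iff, hpd] using congrArg (p ∣ ·) hγ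
  exact hle.trans (Int.natCast_dvd.mp (modEq_ordProj_of_dvd_gammaFn_iff hp hxy hxc hyc).dvd)

theorem signModEq_of_gcd_gammaFn_eq {n d : ℕ} (hn : n ≠ 0) (hd : d ∣ n) {x y c : ℤ}
    (hγ : d.gcd (gammaFn n x) = d.gcd (gammaFn n y))
    (hxc : SignModEq (n / gammaFn n x) x c) (hyc : SignModEq (n / gammaFn n y) y c) :
    SignModEq d x y := by
  rcases hxc with hxc | hxc <;> rcases hyc with hyc | hyc
  · exact .inl (modEq_of_gcd_gammaFn_eq hn hd hγ hxc hyc)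
  · exact .inr (modEq_of_gcd_gammaFn_eq hn hd (by rwa [gammaFn_neg]) hxc
      (by rwa [gammaFn_neg, ← Int.modEq_neg_iff_neg_modEq]))
  · exact .inr (Int.modEq_neg_iff_neg_modEq.mpr (modEq_of_gcd_gammaFn_eq hn hd
      (by rwa [gammaFn_neg]) (by rwa [gammaFn_neg, ← Int.modEq_neg_iff_neg_modEq]) hyc))
  · exact .inl (Int.neg_modEq_neg.mp (modEq_of_gcd_gammaFn_eq hn hd
      (by rwa [gammaFn_neg, gammaFn_neg]) (by rwa [gammaFn_neg, ← Int.modEq_neg_iff_neg_modEq])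
      (by rwa [gammaFn_neg, ← Int.modEq_neg_iff_neg_modEq])))

theorem card_level_le_two_general (n : ℕ) (hn : 0 < n)
    (d : ℕ) (hd : d ∣ n)
    (ν : Fin d → ℤ)
    (hperm : ∃ σ : Equiv.Perm (Fin d), ∀ i : Fin d,
      ν (σ i) ≡ ((i : ℤ) + 1) [ZMOD d] ∨ ν (σ i) ≡ -((i : ℤ) + 1) [ZMOD d])
    (b : ℤ) (e : ℕ) :
    ({i : Fin d | Nat.gcd d (gammaFn n (ν i)) = e ∧
        (ν i ≡ b [ZMOD ((n / gammaFn n (ν i) : ℕ) : ℕ)] ∨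
          ν i ≡ -b [ZMOD ((n / gammaFn n (ν i) : ℕ) : ℕ)])} : Set (Fin d)).ncard ≤ 2 := by
  obtain ⟨σ, hσ⟩ := hperm
  have hν (i : Fin d) : SignModEq d (ν i) ((σ.symm i : ℤ) + 1) := by
    simpa only [SignModEq, σ.apply_symm_apply] using hσ (σ.symm i)
  have hinj (i j : Fin d) (h : (σ.symm i : ℤ) + 1 ≡ (σ.symm j : ℤ) + 1 [ZMOD d]) : i = j :=
    σ.symm.injective (Fin.eq_of_intCast_modEq (h.add_right_cancel' 1))
  refine ncard_le_two_of_pairwise_signModEq hinj fun i hi j hj ↦ ?_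
  exact ((hν i).symm.trans (signModEq_of_gcd_gammaFn_eq hn.ne' hd (hi.1.trans hj.1.symm)
    hi.2 hj.2)).trans (hν j)

/-- **Lemma (At most two indices per level).** Let `n` be odd, `d ∣ n`, and let
`ν_1, …, ν_d` be integers whose multiset of `∼_d`-classes coincides with that of
`(1, …, d)`.  For any integer `b` and any divisor `e` of the radical of `d`, the
set `{i : gcd(d, γ_n(ν_i)) = e and ν_i ∼_{n/γ_n(ν_i)} b}` has at most two
elements. -/
theorem card_level_le_two (n : ℕ) (hn : 0 < n) (hodd : Odd n)
    (d : ℕ) (hd : d ∣ n)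
    (ν : Fin d → ℤ)
    (hperm : ∃ σ : Equiv.Perm (Fin d), ∀ i : Fin d,
      ν (σ i) ≡ ((i : ℤ) + 1) [ZMOD d] ∨ ν (σ i) ≡ -((i : ℤ) + 1) [ZMOD d])
    (b : ℤ) (e : ℕ) (he : e ∣ radical d) :
    ({i : Fin d | Nat.gcd d (gammaFn n (ν i)) = e ∧
        (ν i ≡ b [ZMOD ((n / gammaFn n (ν i) : ℕ) : ℕ)] ∨
          ν i ≡ -b [ZMOD ((n / gammaFn n (ν i) : ℕ) : ℕ)])} : Set (Fin d)).ncard ≤ 2 :=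
  card_level_le_two_general n hn d hd ν hperm b e
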